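/- arXiv:1405.1357 — 5 statements merged into one kernel-verified Lean document; each statement's English description precedes it below -/
import Mathlib

section
/- Let θ ∈ (0, 1/2), C > 0, and define φ̃(t) := (C/(1−2θ)) t^{2θ−1} for t > 0. Let (rₖ) be a positive nonincreasing sequence and suppose that for all k ≥ k₀: r_{k+1}^{2θ−2}(rₖ − r_{k+1}) ≥ β_{k+1}, where 0 < βₖ ≤ β̄. Then there exists c > 0 (depending on C, θ, β̄, r_{k₀}) such that φ̃(r_{k+1}) − φ̃(rₖ) ≥ c β_{k+1} for all k ≥ k₀, and consequently r_{k+1} ≤ D (Σ_{n=k₀}^{k} β_{n+1})^{−1/(1−2θ)} for some constant D > 0. -/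
open Real

-- Bernoulli for negative exponent: for x > 0, q ∈ [0,1]: 1 - q*(x-1) ≤ x^(-q)
lemma bern_neg {x q : ℝ} (hx : 0 < x) (hq0 : 0 ≤ q) (hq1 : q ≤ 1) :
    1 - q * (x - 1) ≤ x ^ (-q) := by
  have h1 : x ^ q ≤ 1 + q * (x - 1) := by
    have := rpow_one_add_le_one_add_mul_self (s := x - 1) (by linarith) hq0 hq1
    simpa using this
  have hxq : 0 < x ^ q := rpow_pos_of_pos hx q
  have h2 : 0 < 1 + q * (x - 1) := lt_of_lt_of_le hxq h1
  rw [rpow_neg hx.le]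
  have h3 : 1 - q * (x - 1) ≤ (1 + q * (x - 1))⁻¹ := by
    have hi : (1 + q * (x - 1)) * (1 + q * (x - 1))⁻¹ = 1 := mul_inv_cancel₀ h2.ne'
    nlinarith [sq_nonneg (q * (x - 1)), inv_pos.mpr h2]
  exact h3.trans (by gcongr)

-- convexity step: 0 < a ≤ b, θ ∈ (0,1/2):
lemma conv_step {a b θ : ℝ} (ha : 0 < a) (hab : a ≤ b) (hθ0 : 0 < θ) (hθ2 : θ < 1/2) :
    (1 - 2*θ) * b ^ (2*θ - 2) * (b - a) ≤ a ^ (2*θ - 1) - b ^ (2*θ - 1) := by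
  have hb : 0 < b := lt_of_lt_of_le ha hab
  have hB : 0 < b ^ (2*θ - 1) := rpow_pos_of_pos hb _
  have key : 1 - (1 - 2*θ) * (a/b - 1) ≤ (a/b) ^ (-(1 - 2*θ)) :=
    bern_neg (div_pos ha hb) (by linarith) (by linarith)
  have e1 : (a/b) ^ (-(1 - 2*θ)) = a ^ (2*θ - 1) / b ^ (2*θ - 1) := by
    rw [show -(1 - 2*θ) = 2*θ - 1 by ring, div_rpow ha.le hb.le]
  rw [e1] at key
  have key2 : (1 - (1 - 2*θ) * (a/b - 1)) * b ^ (2*θ - 1) ≤ a ^ (2*θ - 1) := by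
    calc (1 - (1 - 2*θ) * (a/b - 1)) * b ^ (2*θ - 1)
        ≤ a ^ (2*θ - 1) / b ^ (2*θ - 1) * b ^ (2*θ - 1) := by gcongr
      _ = a ^ (2*θ - 1) := div_mul_cancel₀ _ hB.ne'
  have e2 : b ^ (2*θ - 2) = b ^ (2*θ - 1) / b := by
    rw [show 2*θ - 2 = (2*θ - 1) - 1 by ring, rpow_sub_one hb.ne']
  rw [e2]
  have e3 : (1 - (1 - 2*θ) * (a/b - 1)) * b ^ (2*θ - 1)
      = b ^ (2*θ - 1) + (1 - 2*θ) * (b ^ (2*θ - 1) / b) * (b - a) := by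
    field_simp
    ring
  linarith [key2, e3 ▸ key2]

theorem stmt_3 (θ C : ℝ) (hθ : θ ∈ Set.Ioo (0 : ℝ) (1 / 2)) (hC : 0 < C)
    (r β : ℕ → ℝ) (βbar : ℝ) (k₀ : ℕ)
    (hrpos : ∀ k, 0 < r k) (hrmono : ∀ k, r (k + 1) ≤ r k)
    (hβ : ∀ k, 0 < β k) (hβbar : ∀ k, β k ≤ βbar)
    (hineq : ∀ k ≥ k₀, r (k + 1) ^ (2 * θ - 2) * (r k - r (k + 1)) ≥ β (k + 1)) :
    (∃ c > 0, ∀ k ≥ k₀,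
        C / (1 - 2 * θ) * r (k + 1) ^ (2 * θ - 1) - C / (1 - 2 * θ) * r k ^ (2 * θ - 1)
          ≥ c * β (k + 1)) ∧
    ∃ D > 0, ∀ k ≥ k₀,
        r (k + 1) ≤ D * (∑ n ∈ Finset.Icc k₀ k, β (n + 1)) ^ (-(1 / (1 - 2 * θ))) := by
  obtain ⟨hθ0, hθ2⟩ := hθ
  have hθ2' : θ < 1/2 := hθ2
  have h2θ : (0:ℝ) < 1 - 2*θ := by linarith
  have hβbarpos : 0 < βbar := lt_of_lt_of_le (hβ 0) (hβbar 0)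
  set q' : ℝ := 2 ^ ((1 - 2*θ)/(2 - 2*θ)) with hq'def
  have hq1 : 1 < q' := by
    rw [hq'def, Real.one_lt_rpow_iff (by norm_num)]
    exact Or.inl ⟨by norm_num, div_pos h2θ (by linarith)⟩
  set M : ℝ := (q' - 1) * r k₀ ^ (2*θ - 1) with hMdef
  have hM : 0 < M := mul_pos (by linarith) (Real.rpow_pos_of_pos (hrpos k₀) _)
  set c₀ : ℝ := min ((1 - 2*θ)/2) (M/βbar) with hc₀def
  have hc₀ : 0 < c₀ := lt_min (by linarith) (div_pos hM hβbarpos)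
  have hrle : ∀ m n : ℕ, m ≤ n → r n ≤ r m := by
    have step : ∀ m d : ℕ, r (m + d) ≤ r m := by
      intro m d
      induction d with
      | zero => exact le_rfl
      | succ p ih => exact le_trans (hrmono (m + p)) ih
    intro m n h
    obtain ⟨d, rfl⟩ := Nat.exists_eq_add_of_le h
    exact step m d
  -- key pointwise estimate
  have key : ∀ k ≥ k₀, c₀ * β (k+1) ≤ r (k+1) ^ (2*θ - 1) - r k ^ (2*θ - 1) := by
    intro k hk
    have ha : 0 < r (k+1) := hrpos (k+1)
    have hb : 0 < r k := hrpos k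
    have hab : r (k+1) ≤ r k := hrmono k
    have hβk : 0 < β (k+1) := hβ (k+1)
    have hcs := conv_step ha hab hθ0 hθ2'
    have hin := hineq k hk
    by_cases hcase : r (k+1) ^ (2*θ - 2) ≤ 2 * r k ^ (2*θ - 2)
    · -- case 1
      have h1 : (1 - 2*θ)/2 * β (k+1) ≤ r (k+1) ^ (2*θ - 1) - r k ^ (2*θ - 1) := by
        have hsub : 0 ≤ r k - r (k+1) := by linarith
        have s2 : r (k+1) ^ (2*θ-2) * (r k - r (k+1)) ≤ 2 * r k ^ (2*θ-2) * (r k - r (k+1)) :=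
          mul_le_mul_of_nonneg_right hcase hsub
        have s1 : (1-2*θ)/2 * β (k+1) ≤ (1-2*θ)/2 * (r (k+1) ^ (2*θ-2) * (r k - r (k+1))) :=
          mul_le_mul_of_nonneg_left hin (by linarith)
        have s2' := mul_le_mul_of_nonneg_left s2 (show (0:ℝ) ≤ (1-2*θ)/2 by linarith)
        linarith [s1, s2', hcs]
      have : c₀ * β (k+1) ≤ (1 - 2*θ)/2 * β (k+1) := by
        gcongr
        exact min_le_left _ _
      linarith
    · -- case 2
      push_neg at hcase
      have hB : (0:ℝ) < r k ^ (2*θ - 2) := Real.rpow_pos_of_pos hb _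
      have hx1 : 2 < (r (k+1) / r k) ^ (2*θ - 2) := by
        rw [Real.div_rpow ha.le hb.le]
        rw [lt_div_iff₀ hB]
        linarith [hcase]
      have hx2 : 2 < (r k / r (k+1)) ^ (2 - 2*θ) := by
        have : (r k / r (k+1)) ^ (2 - 2*θ) = (r (k+1) / r k) ^ (2*θ - 2) := by
          rw [show (2:ℝ) - 2*θ = -(2*θ - 2) by ring, Real.rpow_neg (by positivity),
            ← Real.inv_rpow (by positivity), inv_div]
        rw [this]; exact hx1
      have hx3 : q' < (r k / r (k+1)) ^ (1 - 2*θ) := by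
        have he : (1 - 2*θ) = (2 - 2*θ) * ((1 - 2*θ)/(2 - 2*θ)) := by
          rw [mul_comm (2 - 2*θ) ((1 - 2*θ)/(2 - 2*θ)),
            div_mul_cancel₀ _ (show (2:ℝ) - 2*θ ≠ 0 from ne_of_gt (by linarith))]
        rw [he, Real.rpow_mul (by positivity)]
        exact Real.rpow_lt_rpow (by norm_num) hx2 (div_pos h2θ (by linarith))
      have e4 : r (k+1) ^ (2*θ - 1) = r k ^ (2*θ - 1) * (r k / r (k+1)) ^ (1 - 2*θ) := by
        rw [Real.div_rpow hb.le ha.le, show (1:ℝ) - 2*θ = -(2*θ - 1) by ring,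
          Real.rpow_neg hb.le, Real.rpow_neg ha.le]
        field_simp
      have hbk : r k₀ ^ (2*θ - 1) ≤ r k ^ (2*θ - 1) :=
        Real.rpow_le_rpow_of_nonpos hb (hrle k₀ k hk) (by linarith)
      have hMle : M ≤ r (k+1) ^ (2*θ - 1) - r k ^ (2*θ - 1) := by
        have hBk : (0:ℝ) < r k ^ (2*θ - 1) := Real.rpow_pos_of_pos hb _
        calc M = (q' - 1) * r k₀ ^ (2*θ - 1) := hMdef
          _ ≤ (q' - 1) * r k ^ (2*θ - 1) := by gcongr
          _ ≤ ((r k / r (k+1)) ^ (1 - 2*θ) - 1) * r k ^ (2*θ - 1) := by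
              gcongr
          _ = r (k+1) ^ (2*θ - 1) - r k ^ (2*θ - 1) := by rw [e4]; ring
      have : c₀ * β (k+1) ≤ M := by
        calc c₀ * β (k+1) ≤ (M/βbar) * βbar := by
              apply mul_le_mul (min_le_right _ _) (hβbar _) hβk.le (div_pos hM hβbarpos).le
          _ = M := div_mul_cancel₀ _ hβbarpos.ne'
      linarith
  have hCfrac : 0 < C / (1 - 2*θ) := div_pos hC h2θ
  constructor
  · refine ⟨C / (1 - 2*θ) * c₀, mul_pos hCfrac hc₀, fun k hk => ?_⟩
    have := key k hk
    have h := mul_le_mul_of_nonneg_left this hCfrac.le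
    calc (C / (1 - 2*θ)) * c₀ * β (k+1) = (C / (1-2*θ)) * (c₀ * β (k+1)) := by ring
      _ ≤ (C / (1-2*θ)) * (r (k+1) ^ (2*θ - 1) - r k ^ (2*θ - 1)) := h
      _ = C / (1 - 2 * θ) * r (k + 1) ^ (2 * θ - 1) - C / (1 - 2 * θ) * r k ^ (2 * θ - 1) := by
          ring
  · -- second part
    have hsum : ∀ k ≥ k₀, c₀ * (∑ n ∈ Finset.Icc k₀ k, β (n+1))
        ≤ r (k+1) ^ (2*θ - 1) - r k₀ ^ (2*θ - 1) := by
      intro k hk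
      induction k, hk using Nat.le_induction with
      | base => simpa using key k₀ le_rfl
      | succ n hn ih =>
        rw [show Finset.Icc k₀ (n+1) = insert (n+1) (Finset.Icc k₀ n) by
          rw [Finset.insert_Icc_right_eq_Icc_add_one (by omega)]]
        rw [Finset.sum_insert (by simp)]
        have := key (n+1) (by omega)
        have h2 := ih
        nlinarith [this, h2]
    refine ⟨c₀ ^ (-(1 / (1 - 2*θ))), Real.rpow_pos_of_pos hc₀ _, fun k hk => ?_⟩
    set S : ℝ := ∑ n ∈ Finset.Icc k₀ k, β (n+1) with hSdef
    have hS : 0 < S := Finset.sum_pos (fun n _ => hβ (n+1)) (by simp [Finset.nonempty_Icc, hk])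
    have h1 : c₀ * S ≤ r (k+1) ^ (2*θ - 1) := by
      have := hsum k hk
      have : c₀ * S ≤ r (k+1) ^ (2*θ - 1) - r k₀ ^ (2*θ - 1) := this
      nlinarith [Real.rpow_pos_of_pos (hrpos k₀) (2*θ - 1)]
    have ha : 0 < r (k+1) := hrpos (k+1)
    have he : (2*θ - 1) * (-(1 / (1 - 2*θ))) = 1 := by
      field_simp
      ring
    have h2 : r (k+1) = (r (k+1) ^ (2*θ - 1)) ^ (-(1 / (1 - 2*θ))) := by
      rw [← Real.rpow_mul ha.le, he, Real.rpow_one]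
    have h3 : (r (k+1) ^ (2*θ - 1)) ^ (-(1 / (1 - 2*θ))) ≤ (c₀ * S) ^ (-(1 / (1 - 2*θ))) :=
      Real.rpow_le_rpow_of_nonpos (mul_pos hc₀ hS) h1
        (neg_nonpos.mpr (div_pos one_pos h2θ).le)
    rw [Real.mul_rpow hc₀.le hS.le] at h3
    rw [h2]
    exact h3
end

section
/- Let φ : [0, η) → [0, ∞) be concave, continuously differentiable on (0, η) with φ' > 0 and φ(0) = 0, let Φ be a primitive of −(φ')² on (0, η), and suppose lim_{t→0⁺} Φ(t) ∈ ℝ. Let (rₖ) be a nonnegative nonincreasing sequence with r₀ < η, (bₖ) positive with Σ bₖ = ∞, and m > 0 such that whenever rₖ > 0 and r_{k+1} > 0 one has φ'(rₖ)²(rₖ − r_{k+1}) ≥ m b_{k+1}. Then rₖ = 0 for some k ∈ ℕ. -/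
/-!
If no `r k` vanishes, the whole sequence lies in `(0, η)`, where `φ'` is positive and
nonincreasing by concavity. Since `Φ' = -(φ')² ≤ -φ'(r k)²` on `[r (k+1), r k]`, the descent
hypothesis gives `Φ (r k) + m b (k+1) ≤ Φ (r (k+1))`. So `Φ (r n)` exceeds `Φ (r 0)` by
`m` times a partial sum of `b`, while `Φ` is nonincreasing on `(0, η)` and hence bounded above by
its limit at `0⁺`. This makes `b` summable.
-/

open Set Filter Topology Finset

theorem ConcaveOn.antitoneOn_of_hasDerivAt {S : Set ℝ} {f f' : ℝ → ℝ}
    (hfc : ConcaveOn ℝ S f) (hf : ∀ x ∈ S, HasDerivAt f (f' x) x) :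
    AntitoneOn f' S := fun x hx y hy hxy => by
  simpa only [(hf x hx).deriv, (hf y hy).deriv] using
    hfc.antitoneOn_deriv (fun z hz => (hf z hz).differentiableAt) hx hy hxy

theorem sub_le_mul_sub_of_hasDerivAt_le {f f' : ℝ → ℝ} {C a b : ℝ} (hab : a ≤ b)
    (hf : ∀ x ∈ Icc a b, HasDerivAt f (f' x) x) (hf' : ∀ x ∈ Icc a b, f' x ≤ C) :
    f b - f a ≤ C * (b - a) := by
  refine (convex_Icc a b).image_sub_le_mul_sub_of_deriv_le
    (fun x hx => (hf x hx).continuousAt.continuousWithinAt)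
    (fun x hx => (hf x (interior_subset hx)).differentiableAt.differentiableWithinAt)
    (fun x hx => ?_) a (left_mem_Icc.2 hab) b (right_mem_Icc.2 hab) hab
  rw [(hf x (interior_subset hx)).deriv]
  exact hf' x (interior_subset hx)

theorem AntitoneOn.le_of_tendsto_nhdsGT {f : ℝ → ℝ} {a b ℓ t : ℝ}
    (hf : AntitoneOn f (Ioo a b)) (hℓ : Tendsto f (𝓝[>] a) (𝓝 ℓ)) (ht : t ∈ Ioo a b) :
    f t ≤ ℓ := by
  refine ge_of_tendsto hℓ ?_
  filter_upwards [Ioo_mem_nhdsGT ht.1] with s hs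
  exact hf ⟨hs.1, hs.2.trans ht.2⟩ ht hs.2.le

theorem summable_of_add_le_succ {u c : ℕ → ℝ} {M : ℝ} (hc : ∀ n, 0 ≤ c n)
    (hu : ∀ n, u n ≤ M) (h : ∀ n, u n + c n ≤ u (n + 1)) : Summable c := by
  refine summable_of_sum_range_le (c := M - u 0) hc fun n => ?_
  have hsum : ∑ i ∈ range n, c i ≤ ∑ i ∈ range n, (u (i + 1) - u i) :=
    sum_le_sum fun i _ => by linarith [h i]
  rw [sum_range_sub] at hsum
  linarith [hu n]

theorem stmt_5_general (η : ℝ) (φ φ' Φ : ℝ → ℝ)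
    (hconc : ConcaveOn ℝ (Set.Ico 0 η) φ)
    (hderiv : ∀ t ∈ Set.Ioo 0 η, HasDerivAt φ (φ' t) t)
    (hφ'pos : ∀ t ∈ Set.Ioo 0 η, 0 < φ' t)
    (hΦ : ∀ t ∈ Set.Ioo 0 η, HasDerivAt Φ (-(φ' t) ^ 2) t)
    (hΦlim : ∃ ℓ : ℝ, Filter.Tendsto Φ (nhdsWithin 0 (Set.Ioi 0)) (nhds ℓ))
    (r b : ℕ → ℝ) (m : ℝ) (hm : 0 < m)
    (hrnonneg : ∀ k, 0 ≤ r k) (hrmono : ∀ k, r (k + 1) ≤ r k) (hr0 : r 0 < η)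
    (hb : ∀ k, 0 < b k) (hbsum : ¬ Summable b)
    (hineq : ∀ k, 0 < r k → 0 < r (k + 1) →
      (φ' (r k)) ^ 2 * (r k - r (k + 1)) ≥ m * b (k + 1)) :
    ∃ k, r k = 0 := by
  by_contra! hr
  obtain ⟨ℓ, hℓ⟩ := hΦlim
  have hrpos : ∀ k, 0 < r k := fun k => (hrnonneg k).lt_of_ne' (hr k)
  have hrmem : ∀ k, r k ∈ Ioo 0 η := fun k =>
    ⟨hrpos k, (antitone_nat_of_succ_le hrmono (Nat.zero_le k)).trans_lt hr0⟩
  have hφ'anti : AntitoneOn φ' (Ioo 0 η) :=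
    (hconc.subset Ioo_subset_Ico_self (convex_Ioo 0 η)).antitoneOn_of_hasDerivAt hderiv
  have hΦanti : AntitoneOn Φ (Ioo 0 η) := by
    refine antitoneOn_of_hasDerivWithinAt_nonpos (f' := fun t => -φ' t ^ 2) (convex_Ioo 0 η)
      (fun x hx => (hΦ x hx).continuousAt.continuousWithinAt) (fun x hx => ?_) (fun x _ => ?_)
    · rw [interior_Ioo] at hx
      exact (hΦ x hx).hasDerivWithinAt
    · exact neg_nonpos.2 (sq_nonneg _)
  have hstep : ∀ k, Φ (r k) + m * b (k + 1) ≤ Φ (r (k + 1)) := by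
    intro k
    have hIcc : Icc (r (k + 1)) (r k) ⊆ Ioo 0 η := fun x hx =>
      ⟨(hrpos _).trans_le hx.1, hx.2.trans_lt (hrmem k).2⟩
    have hdescent := sub_le_mul_sub_of_hasDerivAt_le (C := -φ' (r k) ^ 2) (hrmono k)
      (fun x hx => hΦ x (hIcc hx)) fun x hx => neg_le_neg <|
        pow_le_pow_left₀ (hφ'pos _ (hrmem k)).le (hφ'anti (hIcc hx) (hrmem k) hx.2) 2
    linarith [hineq k (hrpos k) (hrpos (k + 1))]
  exact hbsum <| (summable_nat_add_iff 1).mp <| (summable_mul_left_iff hm.ne').mp <|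
    summable_of_add_le_succ (fun n => (mul_pos hm (hb _)).le)
      (fun n => hΦanti.le_of_tendsto_nhdsGT hℓ (hrmem n)) hstep

theorem stmt_5 (η : ℝ) (hη : 0 < η) (φ φ' Φ : ℝ → ℝ)
    (hconc : ConcaveOn ℝ (Set.Ico 0 η) φ) (hφ0 : φ 0 = 0)
    (hderiv : ∀ t ∈ Set.Ioo 0 η, HasDerivAt φ (φ' t) t)
    (hφ'pos : ∀ t ∈ Set.Ioo 0 η, 0 < φ' t)
    (hφ'cont : ContinuousOn φ' (Set.Ioo 0 η))
    (hΦ : ∀ t ∈ Set.Ioo 0 η, HasDerivAt Φ (-(φ' t) ^ 2) t)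
    (hΦlim : ∃ ℓ : ℝ, Filter.Tendsto Φ (nhdsWithin 0 (Set.Ioi 0)) (nhds ℓ))
    (r b : ℕ → ℝ) (m : ℝ) (hm : 0 < m)
    (hrnonneg : ∀ k, 0 ≤ r k) (hrmono : ∀ k, r (k + 1) ≤ r k) (hr0 : r 0 < η)
    (hb : ∀ k, 0 < b k) (hbsum : ¬ Summable b)
    (hineq : ∀ k, 0 < r k → 0 < r (k + 1) →
      (φ' (r k)) ^ 2 * (r k - r (k + 1)) ≥ m * b (k + 1)) :
    ∃ k, r k = 0 :=
  stmt_5_general η φ φ' Φ hconc hderiv hφ'pos hΦ hΦlim r b m hm hrnonneg hrmono hr0 hb hbsum hineq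
end

section
/- Let (uₖ), (vₖ) be nonnegative real sequences and M > 0, and suppose 2 u_{k+1} ≤ uₖ + M(vₖ − v_{k+1}) for all k ≥ K, where (vₖ) is nonnegative and nonincreasing. Then Σ_{k=K}^{∞} uₖ₊₁ ≤ u_K + M v_K; in particular Σ uₖ < ∞. -/
/-! Doubling the recursion inequality lets it telescope: summing
`2 u (k+1) ≤ u k + (w k - w (k+1))` over `k < n` leaves `∑_{k<n} u (k+1) + u n ≤ u 0 + w 0 - w n`,
and since `u n` and `w n` are nonnegative the partial sums are bounded by `u 0 + w 0`. -/

open Finset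

section Telescoping

variable {u w : ℕ → ℝ}

theorem sum_range_succ_add_le_of_two_mul_le (h : ∀ k, 2 * u (k + 1) ≤ u k + (w k - w (k + 1)))
    (n : ℕ) : ∑ i ∈ range n, u (i + 1) + u n ≤ u 0 + (w 0 - w n) := by
  induction n with
  | zero => simp
  | succ n ih =>
    rw [sum_range_succ]
    linarith [h n]

theorem summable_succ_and_tsum_le_of_two_mul_le (hu : ∀ k, 0 ≤ u k) (hw : ∀ k, 0 ≤ w k)
    (h : ∀ k, 2 * u (k + 1) ≤ u k + (w k - w (k + 1))) :
    Summable u ∧ ∑' k, u (k + 1) ≤ u 0 + w 0 := by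
  have hbound : ∀ n, ∑ i ∈ range n, u (i + 1) ≤ u 0 + w 0 := fun n => by
    linarith [sum_range_succ_add_le_of_two_mul_le h n, hu n, hw n]
  have hsucc : Summable fun k => u (k + 1) := summable_of_sum_range_le (fun k => hu _) hbound
  exact ⟨(summable_nat_add_iff 1).mp hsucc, hsucc.tsum_le_of_sum_range_le hbound⟩

end Telescoping

theorem stmt_8_general (u v : ℕ → ℝ) (M : ℝ) (K : ℕ) (hM : 0 < M)
    (hu : ∀ k, 0 ≤ u k) (hv : ∀ k, 0 ≤ v k)
    (hineq : ∀ k ≥ K, 2 * u (k + 1) ≤ u k + M * (v k - v (k + 1))) :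
    Summable u ∧ (∑' k, u (K + k + 1)) ≤ u K + M * v K := by
  obtain ⟨hsummable, htsum⟩ :=
    summable_succ_and_tsum_le_of_two_mul_le (u := fun k => u (K + k)) (w := fun k => M * v (K + k))
      (fun k => hu _) (fun k => mul_nonneg hM.le (hv _))
      (fun k => by simpa only [mul_sub, ← add_assoc] using hineq (K + k) (Nat.le_add_right K k))
  exact ⟨(summable_nat_add_iff K).mp (by simpa only [add_comm] using hsummable), htsum⟩

theorem stmt_8 (u v : ℕ → ℝ) (M : ℝ) (K : ℕ) (hM : 0 < M)
    (hu : ∀ k, 0 ≤ u k) (hv : ∀ k, 0 ≤ v k) (hvmono : ∀ k, v (k + 1) ≤ v k)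
    (hineq : ∀ k ≥ K, 2 * u (k + 1) ≤ u k + M * (v k - v (k + 1))) :
    Summable u ∧ (∑' k, u (K + k + 1)) ≤ u K + M * v K :=
  stmt_8_general u v M K hM hu hv hineq
end

section
/- Let f : H → ℝ ∪ {+∞} be proper lower semicontinuous, let x* ∈ dom ∂f, and suppose f has the KL property at x* with desingularizing function φ on Γ_η(x*, δ). Let (xᵏ) satisfy H₁: f(x^{k+1}) + aₖ‖x^{k+1} − xᵏ‖² ≤ f(xᵏ) and H₂ (with εₖ = 0): b_{k+1}‖∂f(x^{k+1})‖₋ ≤ ‖x^{k+1} − xᵏ‖, with M := sup_k 1/(aₖ bₖ) < ∞. If xᵏ and x^{k+1} both lie in Γ_η(x*, δ) with f(xᵏ) > f(x*) and f(x^{k+1}) > f(x*), then 2‖x^{k+1} − xᵏ‖ ≤ ‖xᵏ − x^{k−1}‖ + M[φ(f(xᵏ) − f(x*)) − φ(f(x^{k+1}) − f(x*))]. -/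
open Filter Topology

variable {H : Type*} [NormedAddCommGroup H] [InnerProductSpace ℝ H] [CompleteSpace H]

/-- Fréchet subdifferential of an extended-real-valued function. -/
def frechetSubdiff (f : H → EReal) (x : H) : Set H :=
  {p | f x ≠ ⊤ ∧ ∀ ε : ℝ, 0 < ε → ∀ᶠ y in 𝓝 x,
      f x + (((inner ℝ p (y - x) : ℝ) - ε * ‖y - x‖ : ℝ) : EReal) ≤ f y}

/-- Limiting Fréchet subdifferential. -/
def limSubdiff (f : H → EReal) (x : H) : Set H :=
  {p | ∃ xs ps : ℕ → H,
      Tendsto xs atTop (𝓝 x) ∧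
      Tendsto (fun k => f (xs k)) atTop (𝓝 (f x)) ∧
      (∀ v : H, Tendsto (fun k => (inner ℝ (ps k) v : ℝ)) atTop (𝓝 (inner ℝ p v))) ∧
      ∀ k, ps k ∈ frechetSubdiff f (xs k)}

/-- Lazy slope `inf {‖p‖ : p ∈ ∂f(x)}`, equal to `+∞` when `∂f(x) = ∅`. -/
noncomputable def lazySlope (f : H → EReal) (x : H) : ENNReal :=
  ⨅ p ∈ limSubdiff f x, (‖p‖₊ : ENNReal)

/-!
Write `A, B` for the values of `f - f(x*)` at `xᵏ, xᵏ⁺¹`, `d = ‖xᵏ⁺¹ - xᵏ‖` and `e = ‖xᵏ - xᵏ⁻¹‖`.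
Sufficient decrease gives `aₖ d² ≤ A - B`, while the KL inequality at `xᵏ` combined with the
relative-error bound `H₂` gives `bₖ ≤ φ'(A) e`. Since `φ` is concave, `φ'(A) (A - B) ≤ φ(A) - φ(B)`,
so `d² ≤ M (φ(A) - φ(B)) e`, and `2 d ≤ e + M (φ(A) - φ(B))` follows from AM-GM.
-/

open Set

lemma EReal.exists_coe_of_lt_of_lt_add_coe {c y : EReal} {η : ℝ} (h₁ : c < y)
    (h₂ : y < c + η) : ∃ r s : ℝ, c = r ∧ y = s := by
  have hc : c ≠ ⊥ := by
    rintro rfl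
    simp at h₂
  exact ⟨c.toReal, y.toReal, (EReal.coe_toReal h₁.ne_top hc).symm,
    (EReal.coe_toReal h₂.ne_top h₁.ne_bot).symm⟩

lemma le_mul_of_one_le_ofReal_mul {b c e : ℝ} {s : ENNReal} (he : 0 ≤ e)
    (hc : 1 ≤ ENNReal.ofReal c * s) (hb : ENNReal.ofReal b * s ≤ ENNReal.ofReal e) :
    b ≤ c * e := by
  have hc_pos : 0 < c := by
    by_contra! hc'
    simp [ENNReal.ofReal_of_nonpos hc'] at hc
  rw [← ENNReal.ofReal_le_ofReal_iff (by positivity)]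
  calc ENNReal.ofReal b ≤ ENNReal.ofReal b * (ENNReal.ofReal c * s) := le_mul_of_one_le_right' hc
    _ = ENNReal.ofReal c * (ENNReal.ofReal b * s) := by ring
    _ ≤ ENNReal.ofReal c * ENNReal.ofReal e := by gcongr
    _ = ENNReal.ofReal (c * e) := (ENNReal.ofReal_mul hc_pos.le).symm

lemma ConcaveOn.mul_sub_le_sub_of_hasDerivAt {S : Set ℝ} {f : ℝ → ℝ} {x y f' : ℝ}
    (hfc : ConcaveOn ℝ S f) (hx : x ∈ S) (hy : y ∈ S) (hxy : x ≤ y) (hf' : HasDerivAt f f' y) :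
    f' * (y - x) ≤ f y - f x := by
  rcases hxy.eq_or_lt with rfl | hlt
  · simp
  have := hfc.le_slope_of_hasDerivAt hx hy hlt hf'
  rwa [slope_def_field, le_div_iff₀ (sub_pos.2 hlt)] at this

lemma two_mul_le_of_sufficientDecrease_of_relativeError {φ : ℝ → ℝ}
    {η A B g a b M d e : ℝ} (hconc : ConcaveOn ℝ (Ico 0 η) φ) (hA : A ∈ Ioo 0 η) (hB : 0 ≤ B)
    (hφ : HasDerivAt φ g A) (ha : 0 < a) (hb : 0 < b) (hM : 1 / (a * b) ≤ M) (he : 0 ≤ e)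
    (hdecrease : a * d ^ 2 ≤ A - B) (hslope : b ≤ g * e) :
    2 * d ≤ e + M * (φ A - φ B) := by
  have hab : 0 < a * b := mul_pos ha hb
  have hMab : 1 ≤ M * (a * b) := by rwa [div_le_iff₀ hab] at hM
  have hM0 : 0 ≤ M := by nlinarith
  have hge : 0 < g * e := hb.trans_le hslope
  have hg : 0 ≤ g := (pos_of_mul_pos_left hge he).le
  have hBA : B ≤ A := by nlinarith
  have htangent : g * (A - B) ≤ φ A - φ B :=
    hconc.mul_sub_le_sub_of_hasDerivAt ⟨hB, hBA.trans_lt hA.2⟩ (Ioo_subset_Ico_self hA) hBA hφ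
  have hφ_drop : 0 ≤ φ A - φ B := (mul_nonneg hg (sub_nonneg.2 hBA)).trans htangent
  refine two_mul_le_add_of_sq_le_mul he (mul_nonneg hM0 hφ_drop) ?_
  calc d ^ 2 ≤ M * (a * b) * d ^ 2 := le_mul_of_one_le_left (sq_nonneg d) hMab
    _ = M * (a * d ^ 2) * b := by ring
    _ ≤ M * (A - B) * (g * e) := by gcongr
    _ = e * (M * (g * (A - B))) := by ring
    _ ≤ e * (M * (φ A - φ B)) := by gcongr

theorem stmt_9_general (f : H → EReal) (xstar : H) (η δ M : ℝ) (φ φ' : ℝ → ℝ)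
    (hconc : ConcaveOn ℝ (Set.Ico 0 η) φ)
    (hderiv : ∀ t ∈ Set.Ioo 0 η, HasDerivAt φ (φ' t) t)
    (hKL : ∀ z : H, ‖z - xstar‖ < δ → f xstar < f z → f z < f xstar + (η : EReal) →
      1 ≤ ENNReal.ofReal (φ' ((f z - f xstar).toReal)) * lazySlope f z)
    (x : ℕ → H) (a b : ℕ → ℝ)
    (ha : ∀ k, 0 < a k) (hb : ∀ k, 0 < b k)
    (hM : ∀ k, 1 / (a k * b k) ≤ M)
    (hH1 : ∀ k, f (x (k + 1)) + ((a k * ‖x (k + 1) - x k‖ ^ 2 : ℝ) : EReal) ≤ f (x k))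
    (hH2 : ∀ k, ENNReal.ofReal (b (k + 1)) * lazySlope f (x (k + 1))
        ≤ ENNReal.ofReal ‖x (k + 1) - x k‖)
    (k : ℕ) (hk : 1 ≤ k)
    (hin : ∀ j ∈ ({k, k + 1} : Set ℕ),
      ‖x j - xstar‖ < δ ∧ f xstar < f (x j) ∧ f (x j) < f xstar + (η : EReal)) :
    2 * ‖x (k + 1) - x k‖ ≤ ‖x k - x (k - 1)‖ +
      M * (φ ((f (x k) - f xstar).toReal) - φ ((f (x (k + 1)) - f xstar).toReal)) := by
  obtain ⟨m, rfl⟩ : ∃ m, k = m + 1 := ⟨k - 1, by omega⟩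
  obtain ⟨hnear, hlo, hhi⟩ := hin (m + 1) (by simp)
  obtain ⟨-, hlo', hhi'⟩ := hin (m + 1 + 1) (by simp)
  have hKLk := hKL _ hnear hlo hhi
  have hdecrease := hH1 (m + 1)
  obtain ⟨c, u, hc, hu⟩ := EReal.exists_coe_of_lt_of_lt_add_coe hlo hhi
  obtain ⟨-, v, -, hv⟩ := EReal.exists_coe_of_lt_of_lt_add_coe hlo' hhi'
  rw [hc, hu] at hKLk hlo hhi
  rw [hc, hv] at hlo'
  rw [hu, hv] at hdecrease
  rw [hc, hu, hv]
  simp only [← EReal.coe_sub, ← EReal.coe_add, EReal.toReal_coe, EReal.coe_lt_coe_iff,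
    EReal.coe_le_coe_iff, add_tsub_cancel_right] at hKLk hlo hhi hlo' hdecrease ⊢
  have hA : u - c ∈ Set.Ioo 0 η := ⟨by linarith, by linarith⟩
  exact two_mul_le_of_sufficientDecrease_of_relativeError hconc hA (by linarith) (hderiv _ hA)
    (ha _) (hb _) (hM _) (norm_nonneg _) (by linarith)
    (le_mul_of_one_le_ofReal_mul (norm_nonneg _) hKLk (hH2 m))

theorem stmt_9 (f : H → EReal) (xstar : H) (η δ M : ℝ) (φ φ' : ℝ → ℝ)
    (hproper : ∃ z, f z ≠ ⊤) (hnobot : ∀ z, f z ≠ ⊥) (hlsc : LowerSemicontinuous f)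
    (hfstar : f xstar ≠ ⊤)
    (hη : 0 < η) (hδ : 0 < δ)
    (hφ0 : φ 0 = 0) (hconc : ConcaveOn ℝ (Set.Ico 0 η) φ)
    (hφcont : ContinuousOn φ (Set.Ico 0 η))
    (hderiv : ∀ t ∈ Set.Ioo 0 η, HasDerivAt φ (φ' t) t)
    (hφ'pos : ∀ t ∈ Set.Ioo 0 η, 0 < φ' t)
    (hKL : ∀ z : H, ‖z - xstar‖ < δ → f xstar < f z → f z < f xstar + (η : EReal) →
      1 ≤ ENNReal.ofReal (φ' ((f z - f xstar).toReal)) * lazySlope f z)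
    (x : ℕ → H) (a b : ℕ → ℝ)
    (ha : ∀ k, 0 < a k) (hb : ∀ k, 0 < b k)
    (hM : ∀ k, 1 / (a k * b k) ≤ M)
    (hH1 : ∀ k, f (x (k + 1)) + ((a k * ‖x (k + 1) - x k‖ ^ 2 : ℝ) : EReal) ≤ f (x k))
    (hH2 : ∀ k, ENNReal.ofReal (b (k + 1)) * lazySlope f (x (k + 1))
        ≤ ENNReal.ofReal ‖x (k + 1) - x k‖)
    (k : ℕ) (hk : 1 ≤ k)
    (hin : ∀ j ∈ ({k, k + 1} : Set ℕ),
      ‖x j - xstar‖ < δ ∧ f xstar < f (x j) ∧ f (x j) < f xstar + (η : EReal)) :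
    2 * ‖x (k + 1) - x k‖ ≤ ‖x k - x (k - 1)‖ +
      M * (φ ((f (x k) - f xstar).toReal) - φ ((f (x (k + 1)) - f xstar).toReal)) :=
  stmt_9_general f xstar η δ M φ φ' hconc hderiv hKL x a b ha hb hM hH1 hH2 k hk hin
end

section
/- Let φ(t) = (C/θ)t^θ with C > 0, θ ∈ (0, 1]. Suppose a positive nonincreasing sequence (rₖ) with rₖ → 0 satisfies φ'(r_{k+1})²(rₖ − r_{k+1}) ≥ aₖ b_{k+1}² for all k ≥ k₀, where inf_k aₖ b_{k+1} =: m > 0 and sup_k bₖ =: b̄ < ∞. If θ ∈ [1/2, 1), then there exist c > 0 and k₁ ≥ k₀ such that r_{k+1} ≤ r_{k₁} exp(−c Σ_{n=k₁}^{k} b_{n+1}) for all k ≥ k₁. -/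
/-!
For `θ ≥ 1/2` and `r ≤ 1` one has `φ'(r)² r = C² r^{2θ-1} ≤ C²`, so the hypothesis turns into the
linear decrease `m b_{k+1} r_{k+1} ≤ C² (r_k - r_{k+1})` once `r_{k+1} ≤ 1`. Hence
`r_{k+1} ≤ r_k (1 - m b_{k+1}/(C² + m b_{k+1})) ≤ r_k exp(-c b_{k+1})` with `c = m/(C² + m b̄)`,
and these one-step contractions multiply up to the claimed bound.
-/

open Finset Real Filter

theorem exp_decay_of_forall_le_mul_exp_neg {u x : ℕ → ℝ} {k₁ : ℕ}
    (step : ∀ k ≥ k₁, u (k + 1) ≤ u k * exp (-x k)) :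
    ∀ k ≥ k₁, u (k + 1) ≤ u k₁ * exp (-∑ n ∈ Icc k₁ k, x n) := by
  intro k hk
  induction k, hk using Nat.le_induction with
  | base => simpa using step k₁ le_rfl
  | succ k hk ih =>
    calc u (k + 1 + 1) ≤ u (k + 1) * exp (-x (k + 1)) := step (k + 1) (by omega)
      _ ≤ u k₁ * exp (-∑ n ∈ Icc k₁ k, x n) * exp (-x (k + 1)) := by gcongr
      _ = u k₁ * exp (-∑ n ∈ Icc k₁ (k + 1), x n) := by
        rw [sum_Icc_succ_top (by omega), mul_assoc, ← exp_add, neg_add]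

theorem le_mul_exp_neg_of_mul_le_mul_sub {x y s D : ℝ} (hx : 0 ≤ x) (hs : 0 ≤ s)
    (hD : 0 < D) (h : s * y ≤ D * (x - y)) : y ≤ x * exp (-(s / (D + s))) := by
  have hDs : 0 < D + s := by positivity
  calc y ≤ x * (1 - s / (D + s)) := by
        rw [one_sub_div hDs.ne', add_sub_cancel_right, mul_div_assoc', le_div_iff₀ hDs]
        linarith
    _ ≤ x * exp (-(s / (D + s))) := by
        gcongr
        linarith [add_one_le_exp (-(s / (D + s)))]

theorem sq_mul_rpow_sub_one_mul_self_le {θ x : ℝ} (C : ℝ) (hθ : 1 / 2 ≤ θ) (hx₀ : 0 < x)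
    (hx₁ : x ≤ 1) : (C * x ^ (θ - 1)) ^ 2 * x ≤ C ^ 2 := by
  have hpow : (C * x ^ (θ - 1)) ^ 2 * x = C ^ 2 * x ^ (2 * θ - 1) := by
    rw [mul_pow, ← rpow_mul_natCast hx₀.le, mul_assoc, ← rpow_add_one hx₀.ne']
    congr 2
    push_cast
    ring
  rw [hpow]
  exact mul_le_of_le_one_right (sq_nonneg C) (rpow_le_one hx₀.le hx₁ (by linarith))

theorem mul_mul_le_sq_mul_sub_of_kl {θ C x y a β m : ℝ} (hθ : 1 / 2 ≤ θ) (hy₀ : 0 < y)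
    (hy₁ : y ≤ 1) (hyx : y ≤ x) (hβ : 0 ≤ β) (hm : m ≤ a * β)
    (hkl : (C * y ^ (θ - 1)) ^ 2 * (x - y) ≥ a * β ^ 2) : m * β * y ≤ C ^ 2 * (x - y) :=
  calc m * β * y ≤ a * β ^ 2 * y := mul_le_mul_of_nonneg_right (by nlinarith) hy₀.le
    _ ≤ (C * y ^ (θ - 1)) ^ 2 * (x - y) * y := by gcongr
    _ = (C * y ^ (θ - 1)) ^ 2 * y * (x - y) := by ring
    _ ≤ C ^ 2 * (x - y) :=
      mul_le_mul_of_nonneg_right (sq_mul_rpow_sub_one_mul_self_le C hθ hy₀ hy₁) (by linarith)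

theorem stmt_12_general (θ C : ℝ) (hθ : θ ∈ Set.Ico (1 / 2 : ℝ) 1) (hC : 0 < C)
    (r a b : ℕ → ℝ) (m βbar : ℝ) (k₀ : ℕ)
    (hrpos : ∀ k, 0 < r k) (hrmono : ∀ k, r (k + 1) ≤ r k)
    (hrlim : Filter.Tendsto r Filter.atTop (nhds 0))
    (hb : ∀ k, 0 < b k)
    (hm : 0 < m) (hminf : ∀ k, m ≤ a k * b (k + 1))
    (hbbar : ∀ k, b k ≤ βbar)
    (hineq : ∀ k ≥ k₀, (C * r (k + 1) ^ (θ - 1)) ^ 2 * (r k - r (k + 1)) ≥ a k * b (k + 1) ^ 2) :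
    ∃ c > 0, ∃ k₁ ≥ k₀, ∀ k ≥ k₁,
      r (k + 1) ≤ r k₁ * Real.exp (-c * ∑ n ∈ Finset.Icc k₁ k, b (n + 1)) := by
  obtain ⟨hθ₁, -⟩ := hθ
  obtain ⟨N, hN⟩ := eventually_atTop.mp (hrlim.eventually_le_const zero_lt_one)
  have hβbar : 0 < βbar := (hb 0).trans_le (hbbar 0)
  set c := m / (C ^ 2 + m * βbar)
  refine ⟨c, by positivity, max k₀ N, le_max_left _ _, ?_⟩
  have step : ∀ k ≥ max k₀ N, r (k + 1) ≤ r k * exp (-(c * b (k + 1))) := by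
    intro k hk
    have hbk := hb (k + 1)
    have hdecrease : m * b (k + 1) * r (k + 1) ≤ C ^ 2 * (r k - r (k + 1)) :=
      mul_mul_le_sq_mul_sub_of_kl hθ₁ (hrpos (k + 1)) (hN (k + 1) (by omega)) (hrmono k)
        hbk.le (hminf k) (hineq k (by omega))
    calc r (k + 1) ≤ r k * exp (-(m * b (k + 1) / (C ^ 2 + m * b (k + 1)))) :=
          le_mul_exp_neg_of_mul_le_mul_sub (hrpos k).le (by positivity) (by positivity) hdecrease
      _ ≤ r k * exp (-(c * b (k + 1))) := by
          rw [div_mul_eq_mul_div]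
          gcongr
          exacts [(hrpos k).le, hbbar (k + 1)]
  simpa [mul_sum] using exp_decay_of_forall_le_mul_exp_neg step

theorem stmt_12 (θ C : ℝ) (hθ : θ ∈ Set.Ico (1 / 2 : ℝ) 1) (hC : 0 < C)
    (r a b : ℕ → ℝ) (m βbar : ℝ) (k₀ : ℕ)
    (hrpos : ∀ k, 0 < r k) (hrmono : ∀ k, r (k + 1) ≤ r k)
    (hrlim : Filter.Tendsto r Filter.atTop (nhds 0))
    (ha : ∀ k, 0 < a k) (hb : ∀ k, 0 < b k)
    (hm : 0 < m) (hminf : ∀ k, m ≤ a k * b (k + 1))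
    (hbbar : ∀ k, b k ≤ βbar)
    (hineq : ∀ k ≥ k₀, (C * r (k + 1) ^ (θ - 1)) ^ 2 * (r k - r (k + 1)) ≥ a k * b (k + 1) ^ 2) :
    ∃ c > 0, ∃ k₁ ≥ k₀, ∀ k ≥ k₁,
      r (k + 1) ≤ r k₁ * Real.exp (-c * ∑ n ∈ Finset.Icc k₁ k, b (n + 1)) :=
  stmt_12_general θ C hθ hC r a b m βbar k₀ hrpos hrmono hrlim hb hm hminf hbbar hineq
end
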